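/- Let G be a finite connected simple graph with maximum degree Δ ≥ 1, and let ε be a real number with 0 ≤ ε and ε·Δ < 1. Then the relative-excitability dynamics R_ε started from the configuration in which a single vertex s is excited and every other vertex is resting satisfies, for every time t ≥ 0 and vertex v: v is excited at time t iff dist(s,v) = t, and v is refractory at time t iff t ≥ 1 and dist(s,v) = t − 1. (For excitability thresholds below the reciprocal of the maximum degree, the relative rule produces classical circular excitation waves.) -/

import Mathlib

/-- The three states of an excitable automaton node. -/
inductive GHState where
  | resting : GHState
  | excited : GHState
  | refractory : GHState
deriving DecidableEq

open GHState

/-- Number of excited neighbours of `v` in configuration `c`. -/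
def excitedCount {V : Type*} (G : SimpleGraph V) [Fintype V] [DecidableRel G.Adj]
    (c : V → GHState) (v : V) : ℕ :=
  ((G.neighborFinset v).filter (fun u => c u = excited)).card

/-- Greenberg–Hastings update map `F_S`: a resting vertex becomes excited iff its
number of excited neighbours lies in `S`; an excited vertex becomes refractory;
a refractory vertex becomes resting. -/
def ghStep {V : Type*} (G : SimpleGraph V) [Fintype V] [DecidableRel G.Adj]
    (S : Set ℕ) [DecidablePred (· ∈ S)] (c : V → GHState) : V → GHState :=
  fun v =>
    match c v with
    | resting => if excitedCount G c v ∈ S then excited else resting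
    | excited => refractory
    | refractory => resting

open scoped Classical in
/-- Relative-excitability update map `R_ε`: a resting vertex `v` becomes excited iff
`σ(v)/d(v) > ε`, where `σ(v)` is its number of excited neighbours and `d(v)` its
degree; an excited vertex becomes refractory; a refractory vertex becomes resting. -/
noncomputable def relStep {V : Type*} (G : SimpleGraph V) [Fintype V] [DecidableRel G.Adj]
    (ε : ℝ) (c : V → GHState) : V → GHState :=
  fun v =>
    match c v with
    | resting =>
        if (excitedCount G c v : ℝ) / (G.degree v : ℝ) > ε then excited else resting
    | excited => refractory
    | refractory => resting

/-!
Since `σ(v) ≤ d(v) ≤ Δ` and `ε < 1/Δ`, the condition `σ(v)/d(v) > ε` holds exactly when `σ(v) ≥ 1`,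
so `R_ε` is the Greenberg–Hastings map with threshold one. For that map the configuration
"excited on the sphere of radius `t` around `s`, refractory on the sphere of radius `t - 1`,
resting elsewhere" steps to the same configuration with `t + 1`: distances along an edge differ
by at most one, and every vertex at distance `t + 1` has a neighbour at distance `t`.
-/

namespace SimpleGraph

variable {V : Type*} (G : SimpleGraph V)

theorem exists_adj_dist_eq_of_dist_eq_succ {s v : V} {t : ℕ} (h : G.dist s v = t + 1) :
    ∃ u, G.Adj u v ∧ G.dist s u = t := by
  obtain ⟨p, hp⟩ := G.exists_walk_of_dist_ne_zero (u := v) (v := s) (by rw [dist_comm]; omega)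
  rw [dist_comm, h] at hp
  cases p with
  | nil => simp at hp
  | @cons _ u _ hadj q =>
    refine ⟨u, hadj.symm, ?_⟩
    have hle : G.dist u s ≤ q.length := G.dist_le q
    have := hadj.symm.diff_dist_adj (u := s)
    rw [Walk.length_cons] at hp
    rw [dist_comm] at hle
    omega

variable [Fintype V] [DecidableRel G.Adj]

theorem excitedCount_le_degree (c : V → GHState) (v : V) : excitedCount G c v ≤ G.degree v :=
  (Finset.card_filter_le _ _).trans_eq (G.card_neighborFinset_eq_degree v)

theorem excitedCount_pos_iff (c : V → GHState) (v : V) :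
    0 < excitedCount G c v ↔ ∃ u, G.Adj v u ∧ c u = excited := by
  simp [excitedCount, Finset.card_pos, Finset.filter_nonempty_iff]

end SimpleGraph

theorem lt_div_iff_pos_of_mul_lt_one {ε : ℝ} {σ d Δ : ℕ} (hσ : σ ≤ d) (hd : d ≤ Δ)
    (hε0 : 0 ≤ ε) (hεΔ : ε * Δ < 1) : ε < σ / d ↔ 0 < σ := by
  rcases Nat.eq_zero_or_pos σ with rfl | hσpos
  · simpa using hε0
  have hdpos : (0 : ℝ) < d := by exact_mod_cast hσpos.trans_le hσ
  have hΔpos : (0 : ℝ) < Δ := by exact_mod_cast (hσpos.trans_le hσ).trans_le hd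
  refine iff_of_true ?_ hσpos
  calc ε < 1 / Δ := by rwa [lt_div_iff₀ hΔpos]
    _ ≤ 1 / d := one_div_le_one_div_of_le hdpos (by exact_mod_cast hd)
    _ ≤ σ / d := by gcongr; exact_mod_cast hσpos

theorem relStep_eq_ghStep_of_mul_maxDegree_lt_one {V : Type*} (G : SimpleGraph V) [Fintype V]
    [DecidableRel G.Adj] {ε : ℝ} (hε0 : 0 ≤ ε) (hεΔ : ε * G.maxDegree < 1) :
    relStep G ε = ghStep G {n | 0 < n} := by
  funext c v
  have hcross := lt_div_iff_pos_of_mul_lt_one (G.excitedCount_le_degree c v)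
    (G.degree_le_maxDegree v) hε0 hεΔ
  simp only [relStep, ghStep, gt_iff_lt, hcross, Set.mem_ofPred_eq]

section CircularWave

variable {V : Type*} (G : SimpleGraph V)

/-- The excitation wave of radius `t` around `s`. For `t = 0` it also excites the vertices not
reachable from `s`, since `G.dist` is `0` on them. -/
noncomputable def circularWave (s : V) (t : ℕ) : V → GHState := fun v =>
  if G.dist s v = t then excited else if G.dist s v + 1 = t then refractory else resting

variable {G} {s v : V} {t : ℕ}

theorem circularWave_eq_excited_iff : circularWave G s t v = excited ↔ G.dist s v = t := by
  unfold circularWave; split_ifs <;> simp_all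

theorem circularWave_eq_refractory_iff :
    circularWave G s t v = refractory ↔ G.dist s v + 1 = t := by
  unfold circularWave; split_ifs <;> simp_all

theorem circularWave_eq_resting_iff :
    circularWave G s t v = resting ↔ G.dist s v ≠ t ∧ G.dist s v + 1 ≠ t := by
  unfold circularWave; split_ifs <;> simp_all

theorem circularWave_zero [DecidableEq V] (hconn : G.Connected) (s : V) :
    circularWave G s 0 = fun u => if u = s then excited else resting := by
  funext v
  simp [circularWave, hconn.dist_eq_zero_iff, eq_comm]

variable [Fintype V] [DecidableRel G.Adj]

theorem ghStep_circularWave (s : V) (t : ℕ) :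
    ghStep G {n | 0 < n} (circularWave G s t) = circularWave G s (t + 1) := by
  funext v
  by_cases hex : G.dist s v = t
  · rw [ghStep, circularWave_eq_excited_iff.mpr hex]
    exact (circularWave_eq_refractory_iff.mpr (by omega)).symm
  by_cases hre : G.dist s v + 1 = t
  · rw [ghStep, circularWave_eq_refractory_iff.mpr hre]
    exact (circularWave_eq_resting_iff.mpr (by omega)).symm
  have hnext : (∃ u, G.Adj v u ∧ circularWave G s t u = excited) ↔ G.dist s v = t + 1 := by
    simp only [circularWave_eq_excited_iff]
    refine ⟨fun ⟨u, hadj, hu⟩ => ?_, fun h => ?_⟩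
    · have := hadj.symm.diff_dist_adj (u := s)
      omega
    · obtain ⟨u, hadj, hu⟩ := G.exists_adj_dist_eq_of_dist_eq_succ h
      exact ⟨u, hadj.symm, hu⟩
  rw [ghStep, circularWave_eq_resting_iff.mpr ⟨hex, hre⟩]
  simp only [Set.mem_ofPred_eq, G.excitedCount_pos_iff, hnext]
  split_ifs with hfront
  · exact (circularWave_eq_excited_iff.mpr hfront).symm
  · exact (circularWave_eq_resting_iff.mpr ⟨hfront, by omega⟩).symm

theorem iterate_ghStep_circularWave (s : V) (t : ℕ) :
    (ghStep G {n | 0 < n})^[t] (circularWave G s 0) = circularWave G s t := by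
  induction t with
  | zero => rfl
  | succ t ih => rw [Function.iterate_succ_apply', ih, ghStep_circularWave]

end CircularWave

theorem relative_small_threshold_circular_wave_general {V : Type*} (G : SimpleGraph V)
    [Fintype V] [DecidableEq V] [DecidableRel G.Adj]
    (hconn : G.Connected)
    (ε : ℝ) (hε0 : 0 ≤ ε) (hεΔ : ε * (G.maxDegree : ℝ) < 1) (s : V) :
    ∀ t : ℕ, ∀ v : V,
      ((relStep G ε)^[t] (fun u => if u = s then excited else resting) v = excited
        ↔ G.dist s v = t) ∧
      ((relStep G ε)^[t] (fun u => if u = s then excited else resting) v = refractory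
        ↔ 1 ≤ t ∧ G.dist s v = t - 1) := by
  intro t v
  rw [relStep_eq_ghStep_of_mul_maxDegree_lt_one G hε0 hεΔ, ← circularWave_zero hconn s,
    iterate_ghStep_circularWave, circularWave_eq_excited_iff, circularWave_eq_refractory_iff]
  omega

/-- For excitability thresholds below the reciprocal of the maximum degree
(`0 ≤ ε` and `ε·Δ < 1`), the relative-excitability dynamics `R_ε` started from a
single excited vertex `s` produces the classical circular excitation wave:
at time `t` a vertex is excited iff its distance from `s` is `t`, and refractory
iff `t ≥ 1` and its distance from `s` is `t - 1`. -/
theorem relative_small_threshold_circular_wave {V : Type*} (G : SimpleGraph V)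
    [Fintype V] [DecidableEq V] [DecidableRel G.Adj]
    (hconn : G.Connected) (hΔ : 1 ≤ G.maxDegree)
    (ε : ℝ) (hε0 : 0 ≤ ε) (hεΔ : ε * (G.maxDegree : ℝ) < 1) (s : V) :
    ∀ t : ℕ, ∀ v : V,
      ((relStep G ε)^[t] (fun u => if u = s then excited else resting) v = excited
        ↔ G.dist s v = t) ∧
      ((relStep G ε)^[t] (fun u => if u = s then excited else resting) v = refractory
        ↔ 1 ≤ t ∧ G.dist s v = t - 1) :=
  relative_small_threshold_circular_wave_general G hconn ε hε0 hεΔ s
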